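/- arXiv:2604.27034 — 9 statements merged into one kernel-verified Lean document; each statement's English description precedes it below -/
import Mathlib

section
/- Let W be a Hermitian complex matrix indexed by Fin m × Fin n. Then there exists a finite family of complex m×n matrices B_1, …, B_k such that p_W(x,y) = ∑_{s=1}^k | ∑_{i,k} conj(x_i) (B_s)_{i,k} y_k |² for all x ∈ ℂ^m and y ∈ ℂ^n, if and only if the partial transpose W^Γ is positive semidefinite. -/
open Matrix
open scoped ComplexOrder

/-- Kronecker product vector: `(x ⊗ y)_{(i,k)} = x i * y k`. -/
noncomputable def kron {m n : ℕ} (x : Fin m → ℂ) (y : Fin n → ℂ) : Fin m × Fin n → ℂ :=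
  fun ik => x ik.1 * y ik.2

/-- The biquadratic form `p_W(x,y) = (x⊗y)ᴴ W (x⊗y)`. -/
noncomputable def bqf {m n : ℕ} (W : Matrix (Fin m × Fin n) (Fin m × Fin n) ℂ)
    (x : Fin m → ℂ) (y : Fin n → ℂ) : ℂ :=
  star (kron x y) ⬝ᵥ (W *ᵥ kron x y)

/-- Partial transpose (on the second factor): `(W^Γ)_{(i,k),(j,l)} = W_{(i,l),(j,k)}`. -/
noncomputable def pt {m n : ℕ} (W : Matrix (Fin m × Fin n) (Fin m × Fin n) ℂ) :
    Matrix (Fin m × Fin n) (Fin m × Fin n) ℂ :=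
  Matrix.of fun p q => W (p.1, q.2) (q.1, p.2)

/-!
The substitution `y ↦ ȳ` turns `p_W(x, y)` into the Hermitian form of `W^Γ` at the product
vector `x ⊗ ȳ`, and `xᴴ B y` into the pairing of `x ⊗ ȳ` with the conjugated entries of `B`.
Hence `p_W = ∑ₛ |xᴴ Bₛ y|²` says exactly that `W^Γ` and `Cᴴ C`, where the rows of `C` are the
conjugated `Bₛ`, have the same form on product vectors. Over `ℂ` a matrix is determined by its
form on product vectors (polarize in each factor separately), so this means `W^Γ = Cᴴ C`;
conversely every positive semidefinite matrix is of the form `Cᴴ C`.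
-/

section QuadraticForm

variable {p : Type*} [Fintype p]

lemma Matrix.star_dotProduct_mulVec_eq_sum (A : Matrix p p ℂ) (z : p → ℂ) :
    star z ⬝ᵥ (A *ᵥ z) = ∑ i, ∑ j, starRingEnd ℂ (z i) * A i j * z j := by
  simp only [dotProduct, mulVec, Finset.mul_sum, Pi.star_apply, RCLike.star_def, mul_assoc]

lemma Matrix.eq_of_forall_star_dotProduct_mulVec_eq {A A' : Matrix p p ℂ}
    (h : ∀ z, star z ⬝ᵥ (A *ᵥ z) = star z ⬝ᵥ (A' *ᵥ z)) : A = A' := by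
  classical
  refine toEuclideanLin.injective <| (ext_inner_map _ _).mp fun z => ?_
  simp only [EuclideanSpace.inner_eq_star_dotProduct, ofLp_toLpLin, toLin'_apply]
  have hz := congrArg star (h z)
  rw [← star_dotProduct_star, ← star_dotProduct_star, star_star] at hz
  rwa [dotProduct_comm, dotProduct_comm _ (star _)]

lemma Matrix.star_dotProduct_conjTranspose_mul_self_mulVec {κ : Type*} [Fintype κ]
    (C : Matrix κ p ℂ) (z : p → ℂ) :
    star z ⬝ᵥ ((Cᴴ * C) *ᵥ z) = ((∑ s, ‖(C *ᵥ z) s‖ ^ 2 : ℝ) : ℂ) := by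
  rw [← mulVec_mulVec, dotProduct_mulVec, ← star_mulVec, dotProduct]
  push_cast
  refine Finset.sum_congr rfl fun s _ => ?_
  rw [← Complex.ofReal_pow, Complex.sq_norm, Complex.normSq_eq_conj_mul_self, Pi.star_apply,
    RCLike.star_def]

end QuadraticForm

section ProductVectors

variable {m n : ℕ}

lemma star_kron_dotProduct_mulVec_kron (A : Matrix (Fin m × Fin n) (Fin m × Fin n) ℂ)
    (a : Fin m → ℂ) (b : Fin n → ℂ) :
    star (kron a b) ⬝ᵥ (A *ᵥ kron a b) = ∑ i, ∑ j, starRingEnd ℂ (a i) *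
      (∑ k, ∑ l, starRingEnd ℂ (b k) * A (i, k) (j, l) * b l) * a j := by
  rw [star_dotProduct_mulVec_eq_sum, Fintype.sum_prod_type]
  simp only [Fintype.sum_prod_type, Finset.mul_sum, Finset.sum_mul, kron, map_mul]
  refine Finset.sum_congr rfl fun i _ => ?_
  rw [Finset.sum_comm]
  refine Finset.sum_congr rfl fun k _ => Finset.sum_congr rfl fun j _ =>
    Finset.sum_congr rfl fun l _ => by ring

lemma eq_of_forall_star_kron_dotProduct_mulVec_kron_eq
    {A A' : Matrix (Fin m × Fin n) (Fin m × Fin n) ℂ}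
    (h : ∀ a b, star (kron a b) ⬝ᵥ (A *ᵥ kron a b) = star (kron a b) ⬝ᵥ (A' *ᵥ kron a b)) :
    A = A' := by
  -- Compressing the second factor by `b` gives an `m × m` matrix with form
  -- `a ↦ (a ⊗ b)ᴴ A (a ⊗ b)`; its `(i, j)` entry is in turn the form of the block
  -- `A ((i, ·), (j, ·))` at `b`.
  have hcompress : ∀ b : Fin n → ℂ,
      (of fun i j => ∑ k, ∑ l, starRingEnd ℂ (b k) * A (i, k) (j, l) * b l :
        Matrix (Fin m) (Fin m) ℂ) =
      of fun i j => ∑ k, ∑ l, starRingEnd ℂ (b k) * A' (i, k) (j, l) * b l := fun b =>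
    eq_of_forall_star_dotProduct_mulVec_eq fun a => by
      have hab := h a b
      rw [star_kron_dotProduct_mulVec_kron, star_kron_dotProduct_mulVec_kron] at hab
      simpa only [star_dotProduct_mulVec_eq_sum, of_apply] using hab
  ext ⟨i, k⟩ ⟨j, l⟩
  have hblock : (of fun k l => A (i, k) (j, l) : Matrix (Fin n) (Fin n) ℂ) =
      of fun k l => A' (i, k) (j, l) :=
    eq_of_forall_star_dotProduct_mulVec_eq fun b => by
      simpa only [star_dotProduct_mulVec_eq_sum, of_apply] using congr_fun₂ (hcompress b) i j
  exact congr_fun₂ hblock k l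

lemma star_kron_dotProduct_pt_mulVec_kron (A : Matrix (Fin m × Fin n) (Fin m × Fin n) ℂ)
    (x : Fin m → ℂ) (y : Fin n → ℂ) :
    star (kron x (star y)) ⬝ᵥ (pt A *ᵥ kron x (star y)) = bqf A x y := by
  rw [bqf, star_kron_dotProduct_mulVec_kron, star_kron_dotProduct_mulVec_kron]
  refine Finset.sum_congr rfl fun i _ => Finset.sum_congr rfl fun j _ => ?_
  rw [Finset.sum_comm]
  simp only [pt, of_apply, Pi.star_apply, RCLike.star_def, Complex.conj_conj]
  congr 2
  exact Finset.sum_congr rfl fun k _ => Finset.sum_congr rfl fun l _ => by ring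

lemma sum_norm_sq_sesq_eq_star_kron_dotProduct {κ : Type*} [Fintype κ]
    (C : Matrix κ (Fin m × Fin n) ℂ) (x : Fin m → ℂ) (y : Fin n → ℂ) :
    ((∑ s, ‖∑ i, ∑ j, starRingEnd ℂ (x i) * star (C s (i, j)) * y j‖ ^ 2 : ℝ) : ℂ) =
      star (kron x (star y)) ⬝ᵥ ((Cᴴ * C) *ᵥ kron x (star y)) := by
  rw [star_dotProduct_conjTranspose_mul_self_mulVec]
  congr 1
  refine Finset.sum_congr rfl fun s _ => ?_
  congr 1
  rw [← Complex.norm_conj, map_sum, mulVec, dotProduct, Fintype.sum_prod_type]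
  simp only [map_sum, map_mul, kron, Pi.star_apply, RCLike.star_def, Complex.conj_conj]
  congr 2 with i
  exact Finset.sum_congr rfl fun j _ => by ring

end ProductVectors

theorem stmt_2_general (m n : ℕ) (W : Matrix (Fin m × Fin n) (Fin m × Fin n) ℂ) :
    (∃ (k : ℕ) (B : Fin k → Matrix (Fin m) (Fin n) ℂ),
      ∀ (x : Fin m → ℂ) (y : Fin n → ℂ),
        bqf W x y =
          ((∑ s : Fin k,
              ‖∑ i : Fin m, ∑ j : Fin n,
                (starRingEnd ℂ) (x i) * B s i j * y j‖ ^ 2 : ℝ) : ℂ))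
    ↔ (pt W).PosSemidef := by
  constructor
  · rintro ⟨k, B, hB⟩
    let C : Matrix (Fin k) (Fin m × Fin n) ℂ := of fun s p => star (B s p.1 p.2)
    suffices pt W = Cᴴ * C from this ▸ posSemidef_conjTranspose_mul_self C
    refine eq_of_forall_star_kron_dotProduct_mulVec_kron_eq fun x b => ?_
    obtain ⟨y, rfl⟩ : ∃ y, b = star y := ⟨star b, (star_star b).symm⟩
    rw [star_kron_dotProduct_pt_mulVec_kron, hB, ← sum_norm_sq_sesq_eq_star_kron_dotProduct]
    simp only [C, of_apply, star_star]
  · intro hW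
    obtain ⟨C, hC⟩ := by
      open scoped MatrixOrder in
      exact CStarAlgebra.nonneg_iff_eq_star_mul_self.mp hW.nonneg
    let C' := C.submatrix finProdFinEquiv.symm id
    have hC' : pt W = C'ᴴ * C' := by
      rw [hC, star_eq_conjTranspose, conjTranspose_submatrix, submatrix_mul_equiv, submatrix_id_id]
    refine ⟨m * n, fun s => of fun i j => star (C' s (i, j)), fun x y => ?_⟩
    rw [← star_kron_dotProduct_pt_mulVec_kron, hC',
      ← sum_norm_sq_sesq_eq_star_kron_dotProduct]
    simp only [of_apply]

theorem stmt_2 (m n : ℕ) (W : Matrix (Fin m × Fin n) (Fin m × Fin n) ℂ)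
    (hW : W.IsHermitian) :
    (∃ (k : ℕ) (B : Fin k → Matrix (Fin m) (Fin n) ℂ),
      ∀ (x : Fin m → ℂ) (y : Fin n → ℂ),
        bqf W x y =
          ((∑ s : Fin k,
              ‖∑ i : Fin m, ∑ j : Fin n,
                (starRingEnd ℂ) (x i) * B s i j * y j‖ ^ 2 : ℝ) : ℂ))
    ↔ (pt W).PosSemidef :=
  stmt_2_general m n W
end

section
/- Let W be a Hermitian complex matrix indexed by Fin m × Fin n. Then the following are equivalent: (a) there exist finite families of complex m×n matrices A_1,…,A_k and B_1,…,B_l such that p_W(x,y) = ∑_r |xᵗ A_r y|² + ∑_s |xᴴ B_s y|² for all x ∈ ℂ^m, y ∈ ℂ^n (i.e., the form p_W is decomposable); (b) there exist positive semidefinite matrices Q and R indexed by Fin m × Fin n with W = Q + R^Γ. -/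
open Matrix
open scoped ComplexOrder

/-! Grouping a matrix `M` on `(Fin m × Fin n)²` into the `m × m` array of its `n × n` blocks
`M_ij`, the form `p_M(x, y)` is the quadratic form in `x` of the matrix `(yᴴ M_ij y)_ij`, so
polarizing twice shows that `p_M` determines `M`. The partial transpose transposes every
block, whence `p_{R^Γ}(x, y) = p_R(x, ȳ)`. A positive semidefinite matrix is a Gram matrix
`Cᴴ C`, and `p_{Cᴴ C}(x, y) = ∑_r |xᵗ C_r y|²` with `C_r` the `r`-th row of `C` reshaped to an
`m × n` matrix; conjugating turns the terms `|xᵗ C_r ȳ|²` of `p_{(Cᴴ C)^Γ}` into `|xᴴ C̄_r y|²`.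
So a decomposition of `p_W` is the same as a decomposition `W = Q + R^Γ`. -/

theorem Matrix.eq_zero_of_forall_star_dotProduct_mulVec_self_eq_zero {ι : Type*} [Fintype ι]
    [DecidableEq ι] {N : Matrix ι ι ℂ} (h : ∀ x : ι → ℂ, star x ⬝ᵥ (N *ᵥ x) = 0) : N = 0 := by
  have := (inner_map_self_eq_zero (toEuclideanLin N)).1 fun x => by
    rw [← inner_conj_symm, EuclideanSpace.inner_eq_star_dotProduct]
    simp only [ofLp_toLpLin, toLin'_apply, dotProduct_comm _ (star _), h, map_zero]
  simpa using this

theorem Matrix.PosSemidef.exists_eq_conjTranspose_mul_self {𝕜 ι : Type*} [RCLike 𝕜] [Fintype ι]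
    [DecidableEq ι] {Q : Matrix ι ι 𝕜} (hQ : Q.PosSemidef) :
    ∃ (k : ℕ) (C : Matrix (Fin k) ι 𝕜), Q = Cᴴ * C := by
  open scoped MatrixOrder in
  obtain ⟨C, rfl⟩ := CStarAlgebra.nonneg_iff_eq_star_mul_self.mp hQ.nonneg
  refine ⟨Fintype.card ι, C.submatrix (Fintype.equivFin ι).symm id, ?_⟩
  rw [conjTranspose_submatrix, submatrix_mul_equiv, submatrix_id_id, star_eq_conjTranspose]

section BiquadraticForm

variable {m n : ℕ}

theorem bqf_add (P Q : Matrix (Fin m × Fin n) (Fin m × Fin n) ℂ) (x : Fin m → ℂ)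
    (y : Fin n → ℂ) : bqf (P + Q) x y = bqf P x y + bqf Q x y := by
  simp only [bqf, add_mulVec, dotProduct_add]

theorem bqf_sub (P Q : Matrix (Fin m × Fin n) (Fin m × Fin n) ℂ) (x : Fin m → ℂ)
    (y : Fin n → ℂ) : bqf (P - Q) x y = bqf P x y - bqf Q x y := by
  simp only [bqf, sub_mulVec, dotProduct_sub]

theorem bqf_eq_star_dotProduct_mulVec_blocks (M : Matrix (Fin m × Fin n) (Fin m × Fin n) ℂ)
    (x : Fin m → ℂ) (y : Fin n → ℂ) :
    bqf M x y = star x ⬝ᵥ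
      (((comp _ _ _ _ ℂ).symm M).map (fun B => star y ⬝ᵥ (B *ᵥ y)) *ᵥ x) := by
  simp only [bqf, kron, dotProduct, mulVec, map_apply, comp_symm_apply, Pi.star_apply,
    Fintype.sum_prod_type, star_mul', Finset.mul_sum, Finset.sum_mul]
  refine Finset.sum_congr rfl fun i _ => ?_
  rw [Finset.sum_comm]
  refine Finset.sum_congr rfl fun j _ => Finset.sum_congr rfl fun k _ =>
    Finset.sum_congr rfl fun l _ => by ring

theorem eq_zero_of_forall_bqf_eq_zero {M : Matrix (Fin m × Fin n) (Fin m × Fin n) ℂ}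
    (h : ∀ x y, bqf M x y = 0) : M = 0 := by
  have hblocks : (comp _ _ _ _ ℂ).symm M = 0 := by
    ext1 i j
    refine eq_zero_of_forall_star_dotProduct_mulVec_self_eq_zero fun y => ?_
    have := eq_zero_of_forall_star_dotProduct_mulVec_self_eq_zero
      (N := ((comp _ _ _ _ ℂ).symm M).map fun B => star y ⬝ᵥ (B *ᵥ y)) fun x => by
        rw [← bqf_eq_star_dotProduct_mulVec_blocks, h]
    exact congr_fun (congr_fun this i) j
  exact (Equiv.symm_apply_eq _).mp hblocks

theorem bqf_injective {P Q : Matrix (Fin m × Fin n) (Fin m × Fin n) ℂ}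
    (h : ∀ x y, bqf P x y = bqf Q x y) : P = Q :=
  sub_eq_zero.mp <| eq_zero_of_forall_bqf_eq_zero fun x y => by rw [bqf_sub, h, sub_self]

theorem comp_symm_pt (R : Matrix (Fin m × Fin n) (Fin m × Fin n) ℂ) :
    (comp _ _ _ _ ℂ).symm (pt R) = ((comp _ _ _ _ ℂ).symm R).map transpose :=
  rfl

theorem bqf_pt (R : Matrix (Fin m × Fin n) (Fin m × Fin n) ℂ) (x : Fin m → ℂ) (y : Fin n → ℂ) :
    bqf (pt R) x y = bqf R x (star y) := by
  rw [bqf_eq_star_dotProduct_mulVec_blocks, bqf_eq_star_dotProduct_mulVec_blocks, comp_symm_pt,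
    map_map]
  congr 3
  ext B
  rw [Function.comp_apply, dotProduct_mulVec, vecMul_transpose, dotProduct_comm, star_star]

theorem mulVec_kron {κ : Type*} [Fintype κ] (C : Matrix κ (Fin m × Fin n) ℂ)
    (x : Fin m → ℂ) (y : Fin n → ℂ) (r : κ) :
    (C *ᵥ kron x y) r = ∑ i, ∑ j, x i * C r (i, j) * y j := by
  simp only [mulVec, dotProduct, kron, Fintype.sum_prod_type]
  exact Finset.sum_congr rfl fun i _ => Finset.sum_congr rfl fun j _ => by ring

theorem bqf_conjTranspose_mul_self {κ : Type*} [Fintype κ] (C : Matrix κ (Fin m × Fin n) ℂ)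
    (x : Fin m → ℂ) (y : Fin n → ℂ) :
    bqf (Cᴴ * C) x y = ((∑ r, ‖∑ i, ∑ j, x i * C r (i, j) * y j‖ ^ 2 : ℝ) : ℂ) := by
  rw [bqf, ← mulVec_mulVec, dotProduct_mulVec, ← star_mulVec, dotProduct, Complex.ofReal_sum]
  refine Finset.sum_congr rfl fun r _ => ?_
  rw [Pi.star_apply, RCLike.star_def, mul_comm, Complex.mul_conj, Complex.sq_norm, mulVec_kron]

theorem bqf_pt_conjTranspose_mul_self {κ : Type*} [Fintype κ] (D : Matrix κ (Fin m × Fin n) ℂ)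
    (x : Fin m → ℂ) (y : Fin n → ℂ) :
    bqf (pt (Dᴴ * D)) x y =
      ((∑ s, ‖∑ i, ∑ j, starRingEnd ℂ (x i) * starRingEnd ℂ (D s (i, j)) * y j‖ ^ 2 : ℝ) : ℂ) := by
  rw [bqf_pt, bqf_conjTranspose_mul_self]
  congr 2
  ext s
  rw [← Complex.norm_conj]
  simp only [map_sum, map_mul, Pi.star_apply, RCLike.star_def, Complex.conj_conj]

end BiquadraticForm

theorem stmt_3_general (m n : ℕ) (W : Matrix (Fin m × Fin n) (Fin m × Fin n) ℂ) :
    (∃ (k l : ℕ) (A : Fin k → Matrix (Fin m) (Fin n) ℂ)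
        (B : Fin l → Matrix (Fin m) (Fin n) ℂ),
      ∀ (x : Fin m → ℂ) (y : Fin n → ℂ),
        bqf W x y =
          (((∑ r : Fin k, ‖∑ i : Fin m, ∑ j : Fin n, x i * A r i j * y j‖ ^ 2)
            + ∑ s : Fin l,
                ‖∑ i : Fin m, ∑ j : Fin n,
                  (starRingEnd ℂ) (x i) * B s i j * y j‖ ^ 2 : ℝ) : ℂ))
    ↔ (∃ Q R : Matrix (Fin m × Fin n) (Fin m × Fin n) ℂ,
        Q.PosSemidef ∧ R.PosSemidef ∧ W = Q + pt R) := by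
  constructor
  · rintro ⟨k, l, A, B, hW⟩
    let C : Matrix (Fin k) (Fin m × Fin n) ℂ := of fun r p => A r p.1 p.2
    let D : Matrix (Fin l) (Fin m × Fin n) ℂ := of fun s p => starRingEnd ℂ (B s p.1 p.2)
    refine ⟨Cᴴ * C, Dᴴ * D, posSemidef_conjTranspose_mul_self C,
      posSemidef_conjTranspose_mul_self D, bqf_injective fun x y => ?_⟩
    rw [hW, bqf_add, bqf_conjTranspose_mul_self, bqf_pt_conjTranspose_mul_self]
    simp only [C, D, of_apply, Complex.conj_conj, Complex.ofReal_add]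
  · rintro ⟨Q, R, hQ, hR, rfl⟩
    obtain ⟨k, C, rfl⟩ := hQ.exists_eq_conjTranspose_mul_self
    obtain ⟨l, D, rfl⟩ := hR.exists_eq_conjTranspose_mul_self
    refine ⟨k, l, fun r => of fun i j => C r (i, j),
      fun s => of fun i j => starRingEnd ℂ (D s (i, j)), fun x y => ?_⟩
    rw [bqf_add, bqf_conjTranspose_mul_self, bqf_pt_conjTranspose_mul_self]
    push_cast
    rfl

theorem stmt_3 (m n : ℕ) (W : Matrix (Fin m × Fin n) (Fin m × Fin n) ℂ)
    (hW : W.IsHermitian) :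
    (∃ (k l : ℕ) (A : Fin k → Matrix (Fin m) (Fin n) ℂ)
        (B : Fin l → Matrix (Fin m) (Fin n) ℂ),
      ∀ (x : Fin m → ℂ) (y : Fin n → ℂ),
        bqf W x y =
          (((∑ r : Fin k, ‖∑ i : Fin m, ∑ j : Fin n, x i * A r i j * y j‖ ^ 2)
            + ∑ s : Fin l,
                ‖∑ i : Fin m, ∑ j : Fin n,
                  (starRingEnd ℂ) (x i) * B s i j * y j‖ ^ 2 : ℝ) : ℂ))
    ↔ (∃ Q R : Matrix (Fin m × Fin n) (Fin m × Fin n) ℂ,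
        Q.PosSemidef ∧ R.PosSemidef ∧ W = Q + pt R) :=
  stmt_3_general m n W
end

section
/- Let X be a Hermitian complex matrix indexed by Fin m × Fin n. Then the trace Tr(X·(Q + R^Γ)) is a nonnegative real number for every pair of positive semidefinite matrices Q, R indexed by Fin m × Fin n, if and only if both X and X^Γ are positive semidefinite. -/
/-!
Against a rank-one matrix `v vᴴ` the trace pairing recovers the quadratic form `vᴴ X v`, and the
trace of a product of two positive semidefinite matrices is nonnegative (write `A = Cᴴ C` and cycle
the trace). Hence a Hermitian `X` is positive semidefinite iff `Tr(X Q) ≥ 0` for every positive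
semidefinite `Q`. The partial transpose is self-adjoint for the trace pairing, so
`Tr(X (Q + R^Γ)) = Tr(X Q) + Tr(X^Γ R)`, and the two summands are tested separately by taking
`R = 0` or `Q = 0`.
-/

open Matrix
open scoped ComplexOrder

namespace Matrix

variable {𝕜 k : Type*} [RCLike 𝕜] [Fintype k]

theorem trace_mul_vecMulVec_star (X : Matrix k k 𝕜) (v : k → 𝕜) :
    (X * vecMulVec v (star v)).trace = star v ⬝ᵥ (X *ᵥ v) := by
  rw [mul_vecMulVec, trace_vecMulVec, dotProduct_comm]

theorem PosSemidef.trace_mul_nonneg [DecidableEq k] {A B : Matrix k k 𝕜}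
    (hA : A.PosSemidef) (hB : B.PosSemidef) : 0 ≤ (A * B).trace := by
  open scoped MatrixOrder in
  obtain ⟨C, rfl⟩ := CStarAlgebra.nonneg_iff_eq_star_mul_self.mp hA.nonneg
  rw [Matrix.mul_assoc, trace_mul_comm]
  exact (hB.mul_mul_conjTranspose_same C).trace_nonneg

theorem IsHermitian.posSemidef_iff_forall_trace_mul_nonneg [DecidableEq k] {X : Matrix k k 𝕜}
    (hX : X.IsHermitian) : X.PosSemidef ↔ ∀ Q : Matrix k k 𝕜, Q.PosSemidef → 0 ≤ (X * Q).trace := by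
  refine ⟨fun hX' Q hQ => hX'.trace_mul_nonneg hQ,
    fun h => .of_dotProduct_mulVec_nonneg hX fun v => ?_⟩
  rw [← trace_mul_vecMulVec_star]
  exact h _ (posSemidef_vecMulVec_self_star v)

end Matrix

section PartialTranspose

variable {m n : ℕ}

theorem trace_mul_pt (X R : Matrix (Fin m × Fin n) (Fin m × Fin n) ℂ) :
    (X * pt R).trace = (pt X * R).trace := by
  simp only [trace, diag, mul_apply, pt, of_apply, Fintype.sum_prod_type]
  refine Fintype.sum_congr _ _ fun a => ?_
  rw [Finset.sum_comm_cycle]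
  exact Fintype.sum_congr _ _ fun d => Finset.sum_comm

theorem Matrix.IsHermitian.pt {X : Matrix (Fin m × Fin n) (Fin m × Fin n) ℂ}
    (hX : X.IsHermitian) : (pt X).IsHermitian := by
  ext p q
  simpa [_root_.pt] using congrFun₂ hX (p.1, q.2) (q.1, p.2)

end PartialTranspose

theorem stmt_5 (m n : ℕ) (X : Matrix (Fin m × Fin n) (Fin m × Fin n) ℂ)
    (hX : X.IsHermitian) :
    (∀ Q R : Matrix (Fin m × Fin n) (Fin m × Fin n) ℂ,
      Q.PosSemidef → R.PosSemidef → 0 ≤ (X * (Q + pt R)).trace)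
    ↔ X.PosSemidef ∧ (pt X).PosSemidef := by
  have trace_split : ∀ Q R : Matrix (Fin m × Fin n) (Fin m × Fin n) ℂ,
      (X * (Q + pt R)).trace = (X * Q).trace + (pt X * R).trace := fun Q R => by
    rw [Matrix.mul_add, trace_add, trace_mul_pt]
  simp only [hX.posSemidef_iff_forall_trace_mul_nonneg,
    hX.pt.posSemidef_iff_forall_trace_mul_nonneg, trace_split]
  refine ⟨fun h => ⟨fun Q hQ => ?_, fun R hR => ?_⟩, fun ⟨hQ, hR⟩ Q R hQ' hR' => ?_⟩
  · simpa using h Q 0 hQ .zero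
  · simpa using h 0 R .zero hR
  · exact add_nonneg (hQ Q hQ') (hR R hR')
end

section
/- Let φ be a complex-linear map from the m×m complex matrices to the n×n complex matrices satisfying φ(Xᴴ) = (φ(X))ᴴ for all X (so that P_φ takes real values). Then φ is positive (φ(A) is positive semidefinite for every positive semidefinite A) if and only if the Choi polynomial P_φ is bounded below, i.e., there exists a real number c such that c ≤ P_φ(x,y) for all x ∈ ℂ^m and y ∈ ℂ^n. -/
open Matrix
open scoped ComplexOrder

/-- The Choi polynomial `P_φ(x,y) = yᴴ · φ(x xᴴ) · y`. -/
noncomputable def choiPoly {m n : ℕ}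
    (φ : Matrix (Fin m) (Fin m) ℂ →ₗ[ℂ] Matrix (Fin n) (Fin n) ℂ)
    (x : Fin m → ℂ) (y : Fin n → ℂ) : ℂ :=
  star y ⬝ᵥ (φ (Matrix.vecMulVec x (star x)) *ᵥ y)

/-!
Positivity of `φ` is positivity on the rank-one matrices `x xᴴ`, since every positive semidefinite
matrix is a sum of these; and `P_φ(·, y)` is a quadratic form, so `P_φ(t x, y) = t² P_φ(x, y)` for
real `t`. A lower bound `c ≤ t² P_φ(x, y)` valid for all `t` therefore forces `P_φ(x, y) ≥ 0`.
-/

theorem Real.nonneg_of_forall_le_sq_mul {a c : ℝ} (h : ∀ t : ℝ, c ≤ t ^ 2 * a) : 0 ≤ a := by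
  by_contra! ha
  have hc : c ≤ 0 := by simpa using h 0
  have hpos : 0 ≤ (1 - c) / -a := div_nonneg (by linarith) (by linarith)
  have := h (√((1 - c) / -a))
  rw [Real.sq_sqrt hpos, div_neg, neg_mul, div_mul_cancel₀ _ ha.ne] at this
  linarith

theorem Complex.nonneg_of_forall_le_sq_mul {c : ℝ} {z : ℂ}
    (h : ∀ t : ℝ, (c : ℂ) ≤ (t : ℂ) ^ 2 * z) : 0 ≤ z := by
  have hre (t : ℝ) : c ≤ t ^ 2 * z.re ∧ 0 = t ^ 2 * z.im := by
    simpa [Complex.le_def, ← Complex.ofReal_pow] using h t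
  rw [Complex.nonneg_iff]
  exact ⟨Real.nonneg_of_forall_le_sq_mul fun t => (hre t).1, by simpa using (hre 1).2⟩

section
variable {m n : ℕ} (φ : Matrix (Fin m) (Fin m) ℂ →ₗ[ℂ] Matrix (Fin n) (Fin n) ℂ)

theorem choiPoly_ofReal_smul (t : ℝ) (x : Fin m → ℂ) (y : Fin n → ℂ) :
    choiPoly φ ((t : ℂ) • x) y = (t : ℂ) ^ 2 * choiPoly φ x y := by
  have hrank : vecMulVec ((t : ℂ) • x) (star ((t : ℂ) • x)) = (t : ℂ) ^ 2 • vecMulVec x (star x) := by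
    rw [star_smul, Complex.star_def, Complex.conj_ofReal, smul_vecMulVec, vecMulVec_smul, smul_smul,
      sq]
  rw [choiPoly, hrank, φ.map_smul, smul_mulVec, dotProduct_smul, smul_eq_mul, choiPoly]

theorem choiPoly_nonneg_of_le {c : ℝ} (hc : ∀ x y, (c : ℂ) ≤ choiPoly φ x y)
    (x : Fin m → ℂ) (y : Fin n → ℂ) : 0 ≤ choiPoly φ x y :=
  Complex.nonneg_of_forall_le_sq_mul fun t => choiPoly_ofReal_smul φ t x y ▸ hc _ y

theorem posSemidef_apply_vecMulVec_of_choiPoly_nonneg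
    (hsa : ∀ X : Matrix (Fin m) (Fin m) ℂ, φ Xᴴ = (φ X)ᴴ) (x : Fin m → ℂ)
    (hx : ∀ y, 0 ≤ choiPoly φ x y) : (φ (vecMulVec x (star x))).PosSemidef := by
  refine .of_dotProduct_mulVec_nonneg ?_ hx
  rw [IsHermitian, ← hsa, (posSemidef_vecMulVec_self_star x).isHermitian.eq]

end

theorem stmt_12 (m n : ℕ)
    (φ : Matrix (Fin m) (Fin m) ℂ →ₗ[ℂ] Matrix (Fin n) (Fin n) ℂ)
    (hsa : ∀ X : Matrix (Fin m) (Fin m) ℂ, φ Xᴴ = (φ X)ᴴ) :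
    (∀ A : Matrix (Fin m) (Fin m) ℂ, A.PosSemidef → (φ A).PosSemidef) ↔
    (∃ c : ℝ, ∀ (x : Fin m → ℂ) (y : Fin n → ℂ), (c : ℂ) ≤ choiPoly φ x y) := by
  constructor
  · intro hpos
    refine ⟨0, fun x y => ?_⟩
    exact_mod_cast (hpos _ (posSemidef_vecMulVec_self_star x)).dotProduct_mulVec_nonneg y
  · rintro ⟨c, hc⟩ A hA
    obtain ⟨k, v, rfl⟩ := posSemidef_iff_eq_sum_vecMulVec.mp hA
    rw [map_sum]
    exact posSemidef_sum _ fun i _ =>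
      posSemidef_apply_vecMulVec_of_choiPoly_nonneg φ hsa (v i) (choiPoly_nonneg_of_le φ hc (v i))
end

section
/- Let φ be a complex-linear map from the m×m complex matrices to the n×n complex matrices such that: (i) φ maps every matrix with real entries to a matrix with real entries; (ii) φ(Xᴴ) = (φ(X))ᴴ for all X; and (iii) φ is decomposable, i.e., there exist finite families of complex m×n matrices V_1,…,V_k and U_1,…,U_l such that φ(X) = ∑_i V_iᴴ X V_i + ∑_j U_jᴴ Xᵗ U_j for all X ∈ M_m(ℂ). Then there exists a finite family of real m×n matrices W_1,…,W_N such that φ(X) = ∑_r W_rᵗ X W_r for every real symmetric m×m matrix X (the restriction of φ to real symmetric matrices is a congruence map). -/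
open Matrix
open scoped ComplexOrder

/-
Over a real symmetric `X` the transpose terms `Uᴴ Xᵀ U` coincide with `Uᴴ X U`, so `φ X` is a sum of
terms `Cᴴ X C`. Writing `C = A + i B` with `A`, `B` real, the real part of `Cᴴ X C` is
`Aᵀ X A + Bᵀ X B`; since `φ X` is real, it equals its real part, a sum of real congruences.
-/

namespace Matrix

variable {ι m n : Type*}

lemma map_re_map_ofReal_of_forall_real {M : Matrix m n ℂ} (h : ∀ i j, ∃ r : ℝ, M i j = r) :
    (M.map Complex.re).map (fun r => (r : ℂ)) = M := by
  ext i j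
  obtain ⟨r, hr⟩ := h i j
  simp [hr]

variable [Fintype ι] [Fintype m]

lemma map_re_conjTranspose_mul_map_ofReal_mul (C : Matrix m n ℂ) (X : Matrix m m ℝ) :
    (Cᴴ * X.map (fun r => (r : ℂ)) * C).map Complex.re =
      (C.map Complex.re)ᵀ * X * C.map Complex.re + (C.map Complex.im)ᵀ * X * C.map Complex.im := by
  ext a b
  simp only [map_apply, mul_apply, add_apply, conjTranspose_apply, transpose_apply,
    Finset.sum_mul, Complex.re_sum, ← Finset.sum_add_distrib]
  refine Finset.sum_congr rfl fun p _ => Finset.sum_congr rfl fun q _ => ?_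
  simp [Complex.mul_re, Complex.mul_im, RCLike.star_def]

def reImParts (C : ι → Matrix m n ℂ) : ι ⊕ ι → Matrix m n ℝ :=
  Sum.elim (fun i => (C i).map Complex.re) (fun i => (C i).map Complex.im)

lemma map_re_sum_conjTranspose_mul_map_ofReal_mul (C : ι → Matrix m n ℂ) (X : Matrix m m ℝ) :
    (∑ i, (C i)ᴴ * X.map (fun r => (r : ℂ)) * C i).map Complex.re =
      ∑ j, (reImParts C j)ᵀ * X * reImParts C j := by
  ext a b
  simp only [Fintype.sum_sum_type, reImParts, Sum.elim_inl, Sum.elim_inr, map_apply, sum_apply,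
    Complex.re_sum, ← Finset.sum_add_distrib]
  refine Finset.sum_congr rfl fun i _ => ?_
  rw [← add_apply, ← map_re_conjTranspose_mul_map_ofReal_mul, map_apply]

lemma exists_fin_sum_transpose_mul_mul_eq {R : Type*} [NonUnitalNonAssocSemiring R]
    (W : ι → Matrix m n R) :
    ∃ (N : ℕ) (W' : Fin N → Matrix m n R),
      ∀ X : Matrix m m R, ∑ r, (W' r)ᵀ * X * W' r = ∑ i, (W i)ᵀ * X * W i :=
  ⟨_, W ∘ (Fintype.equivFin ι).symm, fun _ => Fintype.sum_equiv _ _ _ fun _ => rfl⟩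

end Matrix

theorem stmt_14_general (m n : ℕ)
    (φ : Matrix (Fin m) (Fin m) ℂ →ₗ[ℂ] Matrix (Fin n) (Fin n) ℂ)
    (hreal : ∀ X : Matrix (Fin m) (Fin m) ℂ,
      (∀ i j, ∃ r : ℝ, X i j = (r : ℂ)) → ∀ k l, ∃ r : ℝ, φ X k l = (r : ℂ))
    (hdec : ∃ (k l : ℕ) (V : Fin k → Matrix (Fin m) (Fin n) ℂ)
        (U : Fin l → Matrix (Fin m) (Fin n) ℂ),
      ∀ X : Matrix (Fin m) (Fin m) ℂ,
        φ X = ∑ i, (V i)ᴴ * X * V i + ∑ j, (U j)ᴴ * Xᵀ * U j) :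
    ∃ (N : ℕ) (W : Fin N → Matrix (Fin m) (Fin n) ℝ),
      ∀ X : Matrix (Fin m) (Fin m) ℝ, X = Xᵀ →
        φ (X.map (fun r => (r : ℂ))) =
          (∑ r, (W r)ᵀ * X * W r).map (fun r => (r : ℂ)) := by
  obtain ⟨k, l, V, U, hφ⟩ := hdec
  obtain ⟨N, W, hW⟩ := exists_fin_sum_transpose_mul_mul_eq (reImParts (Sum.elim V U))
  refine ⟨N, W, fun X hX => ?_⟩
  have hφX : φ (X.map (fun r => (r : ℂ))) =
      ∑ i, (Sum.elim V U i)ᴴ * X.map (fun r => (r : ℂ)) * Sum.elim V U i := by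
    rw [hφ, ← transpose_map, ← hX, Fintype.sum_sum_type]
    rfl
  rw [hW, ← map_re_sum_conjTranspose_mul_map_ofReal_mul, ← hφX]
  exact (map_re_map_ofReal_of_forall_real (hreal _ fun i j => ⟨X i j, rfl⟩)).symm

theorem stmt_14 (m n : ℕ)
    (φ : Matrix (Fin m) (Fin m) ℂ →ₗ[ℂ] Matrix (Fin n) (Fin n) ℂ)
    (hreal : ∀ X : Matrix (Fin m) (Fin m) ℂ,
      (∀ i j, ∃ r : ℝ, X i j = (r : ℂ)) → ∀ k l, ∃ r : ℝ, φ X k l = (r : ℂ))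
    (hsa : ∀ X : Matrix (Fin m) (Fin m) ℂ, φ Xᴴ = (φ X)ᴴ)
    (hdec : ∃ (k l : ℕ) (V : Fin k → Matrix (Fin m) (Fin n) ℂ)
        (U : Fin l → Matrix (Fin m) (Fin n) ℂ),
      ∀ X : Matrix (Fin m) (Fin m) ℂ,
        φ X = ∑ i, (V i)ᴴ * X * V i + ∑ j, (U j)ᴴ * Xᵀ * U j) :
    ∃ (N : ℕ) (W : Fin N → Matrix (Fin m) (Fin n) ℝ),
      ∀ X : Matrix (Fin m) (Fin m) ℝ, X = Xᵀ →
        φ (X.map (fun r => (r : ℂ))) =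
          (∑ r, (W r)ᵀ * X * W r).map (fun r => (r : ℂ)) :=
  stmt_14_general m n φ hreal hdec
end

section
/- Fix integers 1 ≤ m ≤ n, set r = n − m, let a be a real number, and let ε_0, …, ε_r be real weights with 0 < ε_α ≤ 1. For α = 0, …, r let V_α be the n×m matrix with entries (V_α)_{q,p} = 1 if q = p + α and 0 otherwise (1 ≤ p ≤ m, 1 ≤ q ≤ n), and define the linear map Φ : M_m(ℂ) → M_n(ℂ) by Φ(X) = a·Tr(X)·I_n − ∑_{α=0}^{r} ε_α · V_α X V_αᴴ. For j = 1, …, n set s_j = ∑_{α = max(0, j−m)}^{min(r, j−1)} ε_α. If a ≥ max_{1 ≤ j ≤ n} s_j, then Φ is decomposable: there exist finite families of complex m×n matrices A_1,…,A_k and B_1,…,B_l such that Φ(X) = ∑_i A_iᴴ X A_i + ∑_j B_jᴴ Xᵗ B_j for all X ∈ M_m(ℂ). -/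
/-!
With `s_j` the weight sums of the statement, `V_α V_αᴴ` is the diagonal projection onto the
coordinates `j` with `j + 1 - m ≤ α ≤ j`, so `∑ ε_α V_α V_αᴴ = diag(s_j)` and
  `Φ(X) = Tr(X) · diag(a - s_j) + ∑ ε_α V_α (Tr(X) I - X) V_αᴴ`.
The first term is completely positive because `a ≥ s_j` and `Tr(X) E_jj = ∑_p E_jp X E_pj`.
The map `X ↦ Tr(X) I - X` is completely copositive, being `½ ∑_{i,j} Cᵢⱼᴴ Xᵗ Cᵢⱼ` with
`Cᵢⱼ = E_ij - E_ji`, and decomposability survives sums, nonnegative scalings and conjugations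
`X ↦ V X Vᴴ`.
-/

open Matrix

section Decomposable

variable {𝕜 : Type*} [RCLike 𝕜] {m n p : Type*} [Fintype m]

def IsDecomposable (Φ : Matrix m m 𝕜 → Matrix n n 𝕜) : Prop :=
  ∃ (k l : ℕ) (A : Fin k → Matrix m n 𝕜) (B : Fin l → Matrix m n 𝕜),
    ∀ X, Φ X = ∑ i, (A i)ᴴ * X * A i + ∑ j, (B j)ᴴ * Xᵀ * B j

namespace IsDecomposable

variable {Φ Ψ : Matrix m m 𝕜 → Matrix n n 𝕜}

theorem of_fintype {ι κ : Type*} [Fintype ι] [Fintype κ] (A : ι → Matrix m n 𝕜)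
    (B : κ → Matrix m n 𝕜)
    (h : ∀ X, Φ X = ∑ i, (A i)ᴴ * X * A i + ∑ j, (B j)ᴴ * Xᵀ * B j) : IsDecomposable Φ :=
  ⟨_, _, A ∘ (Fintype.equivFin ι).symm, B ∘ (Fintype.equivFin κ).symm, fun X => by
    rw [h]
    exact congr_arg₂ (· + ·) (Equiv.sum_comp _ _).symm (Equiv.sum_comp _ _).symm⟩

theorem add (hΦ : IsDecomposable Φ) (hΨ : IsDecomposable Ψ) :
    IsDecomposable fun X => Φ X + Ψ X := by
  obtain ⟨_, _, A, B, hΦ⟩ := hΦ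
  obtain ⟨_, _, A', B', hΨ⟩ := hΨ
  refine of_fintype (Sum.elim A A') (Sum.elim B B') fun X => ?_
  simp only [Fintype.sum_sum_type, Sum.elim_inl, Sum.elim_inr, hΦ, hΨ]
  abel

theorem sum {ι : Type*} [Fintype ι] {Φ : ι → Matrix m m 𝕜 → Matrix n n 𝕜}
    (h : ∀ i, IsDecomposable (Φ i)) : IsDecomposable fun X => ∑ i, Φ i X := by
  choose k l A B hΦ using h
  refine of_fintype (fun s : Σ i, Fin (k i) => A s.1 s.2) (fun s : Σ i, Fin (l i) => B s.1 s.2)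
    fun X => ?_
  simp only [Fintype.sum_sigma, hΦ, Finset.sum_add_distrib]

theorem smul (h : IsDecomposable Φ) {c : ℝ} (hc : 0 ≤ c) :
    IsDecomposable fun X => (c : 𝕜) • Φ X := by
  obtain ⟨k, l, A, B, hΦ⟩ := h
  refine ⟨k, l, fun i => (√c : 𝕜) • A i, fun j => (√c : 𝕜) • B j, fun X => ?_⟩
  have hsq : (√c : 𝕜) * star (√c : 𝕜) = c := by
    rw [RCLike.star_def, RCLike.conj_ofReal, ← RCLike.ofReal_mul, Real.mul_self_sqrt hc]
  simp only [hΦ, conjTranspose_smul, Matrix.smul_mul, Matrix.mul_smul, smul_smul,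
    ← Finset.smul_sum, smul_add, hsq]

theorem conj [Fintype n] (h : IsDecomposable Φ) (V : Matrix p n 𝕜) :
    IsDecomposable fun X => V * Φ X * Vᴴ := by
  obtain ⟨k, l, A, B, hΦ⟩ := h
  refine ⟨k, l, fun i => A i * Vᴴ, fun j => B j * Vᴴ, fun X => ?_⟩
  simp only [hΦ, conjTranspose_mul, conjTranspose_conjTranspose, Matrix.mul_add, Matrix.add_mul,
    Matrix.mul_sum, Matrix.sum_mul, Matrix.mul_assoc]

end IsDecomposable

theorem isDecomposable_trace_smul_single [DecidableEq m] [DecidableEq n] (j : n) :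
    IsDecomposable fun X : Matrix m m 𝕜 => trace X • single j j (1 : 𝕜) :=
  .of_fintype (fun i : m => single i j 1) (fun _ : Empty => 0) fun X => by
    simp [trace, Finset.sum_smul, smul_single]

theorem isDecomposable_trace_smul_diagonal [Fintype n] [DecidableEq m] [DecidableEq n]
    {d : n → ℝ} (hd : 0 ≤ d) :
    IsDecomposable fun X : Matrix m m 𝕜 => trace X • diagonal fun j => (d j : 𝕜) := by
  convert IsDecomposable.sum fun j =>
    (isDecomposable_trace_smul_single (𝕜 := 𝕜) (m := m) j).smul (hd j) using 1
  ext1 X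
  simp only [← sum_single_eq_diagonal, Finset.smul_sum, smul_single, smul_eq_mul, mul_one,
    mul_comm]

theorem conjTranspose_mul_transpose_mul_single_sub_single [DecidableEq m] (X : Matrix m m 𝕜)
    (i j : m) :
    (single i j 1 - single j i 1)ᴴ * Xᵀ * (single i j (1 : 𝕜) - single j i 1) =
      single j j (X i i) + single i i (X j j) - single j i (X j i) - single i j (X i j) := by
  simp only [conjTranspose_sub, conjTranspose_single, star_one, sub_mul, mul_sub,
    single_mul_mul_single, transpose_apply, one_mul, mul_one]
  abel

theorem sum_conjTranspose_mul_transpose_mul_single_sub_single [DecidableEq m]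
    (X : Matrix m m 𝕜) :
    ∑ i, ∑ j, (single i j 1 - single j i 1)ᴴ * Xᵀ * (single i j (1 : 𝕜) - single j i 1) =
      (2 : 𝕜) • (trace X • 1 - X) := by
  simp only [conjTranspose_mul_transpose_mul_single_sub_single, Finset.sum_sub_distrib,
    Finset.sum_add_distrib]
  ext a b
  simp only [Matrix.sub_apply, Matrix.add_apply, Matrix.sum_apply, single_apply, ite_and,
    Finset.sum_ite_eq', Finset.mem_univ, ↓reduceIte, Finset.sum_ite_irrel, Finset.sum_const_zero,
    trace, diag_apply, Matrix.smul_apply, one_apply, smul_eq_mul, mul_ite, mul_one, mul_zero]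
  split_ifs <;> ring

theorem isDecomposable_trace_smul_one_sub [DecidableEq m] :
    IsDecomposable fun X : Matrix m m 𝕜 => trace X • 1 - X := by
  have h := IsDecomposable.of_fintype (Φ := fun X : Matrix m m 𝕜 => (2 : 𝕜) • (trace X • 1 - X))
    (fun _ : Empty => 0) (fun ij : m × m => single ij.1 ij.2 1 - single ij.2 ij.1 1) fun X => by
      rw [Fintype.sum_prod_type, sum_conjTranspose_mul_transpose_mul_single_sub_single,
        Finset.univ_eq_empty, Finset.sum_empty, zero_add]
  convert h.smul (c := 1 / 2) (by norm_num) using 1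
  ext1 X
  rw [smul_smul, one_div, RCLike.ofReal_inv, RCLike.ofReal_ofNat, inv_mul_cancel₀ two_ne_zero,
    one_smul]

theorem smul_trace_smul_one_sub_sum_conj {ι : Type*} [Fintype ι] [DecidableEq m] [DecidableEq n]
    (a : 𝕜) (ε : ι → 𝕜) (V : ι → Matrix n m 𝕜) (X : Matrix m m 𝕜) :
    a • trace X • (1 : Matrix n n 𝕜) - ∑ i, ε i • (V i * X * (V i)ᴴ) =
      trace X • (a • 1 - ∑ i, ε i • (V i * (V i)ᴴ)) +
        ∑ i, ε i • (V i * (trace X • 1 - X) * (V i)ᴴ) := by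
  simp only [Matrix.mul_sub, Matrix.sub_mul, Matrix.mul_smul, Matrix.smul_mul, Matrix.mul_one,
    smul_sub, Finset.sum_sub_distrib, Finset.smul_sum, smul_comm (trace X) a,
    smul_comm (trace X) (ε _)]
  abel

end Decomposable

theorem shift_mul_conjTranspose_shift {𝕜 : Type*} [RCLike 𝕜] (m n k : ℕ) :
    (of fun (q : Fin n) (p : Fin m) => if (q : ℕ) = p + k then (1 : 𝕜) else 0) *
      (of fun (q : Fin n) (p : Fin m) => if (q : ℕ) = p + k then (1 : 𝕜) else 0)ᴴ =
    diagonal fun q : Fin n => if (q : ℕ) + 1 - m ≤ k ∧ k ≤ q then 1 else 0 := by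
  ext q q'
  simp only [mul_apply, conjTranspose_apply, of_apply, apply_ite star, star_one, star_zero,
    ite_mul, one_mul, zero_mul, ← ite_and]
  by_cases hq : q = q'
  · subst hq
    have hshift : ∀ p : ℕ, (q : ℕ) = p + k ↔ p = q - k ∧ k ≤ q := by omega
    simp only [and_self, diagonal_apply_eq, hshift, ite_and]
    rw [Fin.sum_univ_eq_sum_range
      (fun p => if p = (q : ℕ) - k then if k ≤ (q : ℕ) then (1 : 𝕜) else 0 else 0),
      Finset.sum_ite_eq']
    simp only [Finset.mem_range]
    split_ifs <;> first | rfl | omega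
  · rw [diagonal_apply_ne _ hq]
    exact Finset.sum_eq_zero fun p _ => if_neg fun h => hq (Fin.ext (by omega))

theorem stmt_15_general (m n : ℕ) (a : ℝ)
    (ε : Fin (n - m + 1) → ℝ) (hε : ∀ α, 0 < ε α ∧ ε α ≤ 1)
    (Φ : Matrix (Fin m) (Fin m) ℂ → Matrix (Fin n) (Fin n) ℂ)
    (hΦ : ∀ X, Φ X = (a : ℂ) • Matrix.trace X • (1 : Matrix (Fin n) (Fin n) ℂ)
      - ∑ α : Fin (n - m + 1), (ε α : ℂ) •
          ((Matrix.of fun (q : Fin n) (p : Fin m) =>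
              if (q : ℕ) = (p : ℕ) + (α : ℕ) then (1 : ℂ) else 0) * X *
            (Matrix.of fun (q : Fin n) (p : Fin m) =>
              if (q : ℕ) = (p : ℕ) + (α : ℕ) then (1 : ℂ) else 0)ᴴ))
    (ha : ∀ j : Fin n,
      (∑ α : Fin (n - m + 1),
        if (j : ℕ) + 1 - m ≤ (α : ℕ) ∧ (α : ℕ) ≤ (j : ℕ) then ε α else 0) ≤ a) :
    ∃ (k l : ℕ) (A : Fin k → Matrix (Fin m) (Fin n) ℂ)
        (B : Fin l → Matrix (Fin m) (Fin n) ℂ),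
      ∀ X : Matrix (Fin m) (Fin m) ℂ,
        Φ X = ∑ i, (A i)ᴴ * X * A i + ∑ j, (B j)ᴴ * Xᵀ * B j := by
  set V : Fin (n - m + 1) → Matrix (Fin n) (Fin m) ℂ := fun α =>
    of fun q p => if (q : ℕ) = (p : ℕ) + (α : ℕ) then (1 : ℂ) else 0
  set s : Fin n → ℝ := fun j =>
    ∑ α : Fin (n - m + 1), if (j : ℕ) + 1 - m ≤ (α : ℕ) ∧ (α : ℕ) ≤ (j : ℕ) then ε α else 0
  have hdiag : (a : ℂ) • 1 - ∑ α, (ε α : ℂ) • (V α * (V α)ᴴ) =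
      diagonal fun j => ((a - s j : ℝ) : ℂ) := by
    simp only [V, shift_mul_conjTranspose_shift]
    ext i j
    rcases eq_or_ne i j with rfl | hij
    · simp [s, Matrix.sum_apply, apply_ite]
    · simp [Matrix.sum_apply, hij]
  have hΦ' : Φ = fun X => trace X • diagonal (fun j => ((a - s j : ℝ) : ℂ)) +
      ∑ α, (ε α : ℂ) • (V α * (trace X • 1 - X) * (V α)ᴴ) := by
    funext X
    rw [hΦ, smul_trace_smul_one_sub_sum_conj, hdiag]
  rw [hΦ']
  exact (isDecomposable_trace_smul_diagonal fun j => sub_nonneg.2 (ha j)).add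
    (IsDecomposable.sum fun α => (isDecomposable_trace_smul_one_sub.conj (V α)).smul (hε α).1.le)

theorem stmt_15 (m n : ℕ) (hm : 1 ≤ m) (hmn : m ≤ n) (a : ℝ)
    (ε : Fin (n - m + 1) → ℝ) (hε : ∀ α, 0 < ε α ∧ ε α ≤ 1)
    (Φ : Matrix (Fin m) (Fin m) ℂ → Matrix (Fin n) (Fin n) ℂ)
    (hΦ : ∀ X, Φ X = (a : ℂ) • Matrix.trace X • (1 : Matrix (Fin n) (Fin n) ℂ)
      - ∑ α : Fin (n - m + 1), (ε α : ℂ) •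
          ((Matrix.of fun (q : Fin n) (p : Fin m) =>
              if (q : ℕ) = (p : ℕ) + (α : ℕ) then (1 : ℂ) else 0) * X *
            (Matrix.of fun (q : Fin n) (p : Fin m) =>
              if (q : ℕ) = (p : ℕ) + (α : ℕ) then (1 : ℂ) else 0)ᴴ))
    (ha : ∀ j : Fin n,
      (∑ α : Fin (n - m + 1),
        if (j : ℕ) + 1 - m ≤ (α : ℕ) ∧ (α : ℕ) ≤ (j : ℕ) then ε α else 0) ≤ a) :
    ∃ (k l : ℕ) (A : Fin k → Matrix (Fin m) (Fin n) ℂ)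
        (B : Fin l → Matrix (Fin m) (Fin n) ℂ),
      ∀ X : Matrix (Fin m) (Fin m) ℂ,
        Φ X = ∑ i, (A i)ᴴ * X * A i + ∑ j, (B j)ᴴ * Xᵀ * B j :=
  stmt_15_general m n a ε hε Φ hΦ ha
end

section
/- Fix an integer m ≥ 1, a real number ε₀ with 0 < ε₀ ≤ 1, and a real number a, and define Φ : M_m(ℂ) → M_m(ℂ) by Φ(X) = a·Tr(X)·I_m − ε₀·X. Then the following are equivalent: (a) Φ is decomposable, i.e., there exist finite families of complex m×m matrices A_1,…,A_k and B_1,…,B_l with Φ(X) = ∑_i A_iᴴ X A_i + ∑_j B_jᴴ Xᵗ B_j for all X; (b) Φ is positive, i.e., Φ(A) is positive semidefinite for every positive semidefinite A; (c) a ≥ ε₀. -/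
open Matrix
open scoped ComplexOrder

/-!
Decomposable maps are positive, since congruences `X ↦ Aᴴ X A` and the transpose preserve positive
semidefiniteness. A positive `Φ` sends the matrix unit `E_ii` to a matrix with diagonal entry
`a - ε₀`, so `ε₀ ≤ a`. Conversely, the matrix units satisfy `∑ E_pqᴴ X E_pq = tr(X) I` and
`∑ (E_pq - E_qp)ᴴ Xᵀ (E_pq - E_qp) = 2 (tr(X) I - X)`, so
`Φ X = (a - ε₀) tr(X) I + (ε₀ / 2) · 2 (tr(X) I - X)` is decomposable when `ε₀ ≤ a`.
-/

theorem star_ofReal_sqrt_mul_ofReal_sqrt {r : ℝ} (hr : 0 ≤ r) :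
    star (√r : ℂ) * (√r : ℂ) = r := by
  rw [Complex.star_def, Complex.conj_ofReal, ← Complex.ofReal_mul, Real.mul_self_sqrt hr]

namespace Matrix

variable {n R : Type*} [Fintype n]

section Identities

variable [DecidableEq n] [CommRing R] [StarRing R]

theorem conjTranspose_smul_mul_mul_smul (c : R) (M X : Matrix n n R) :
    (c • M)ᴴ * X * (c • M) = (star c * c) • (Mᴴ * X * M) := by
  rw [conjTranspose_smul, smul_mul_assoc, smul_mul_assoc, mul_smul_comm, smul_smul]

theorem sum_sum_conjTranspose_single_mul_mul_single (Y : Matrix n n R) :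
    ∑ p, ∑ q, (single p q (1 : R))ᴴ * Y * single p q 1 = Y.trace • 1 := by
  simp only [conjTranspose_single, star_one, single_mul_mul_single, one_mul, mul_one]
  rw [Finset.sum_comm, ← sum_single_one, Finset.smul_sum]
  refine Finset.sum_congr rfl fun q _ => ?_
  rw [smul_single, smul_eq_mul, mul_one, trace]
  exact (map_sum (singleAddMonoidHom (α := R) q q) _ _).symm

theorem sum_sum_conjTranspose_single_swap_mul_mul_single (Y : Matrix n n R) :
    ∑ p, ∑ q, (single q p (1 : R))ᴴ * Y * single p q 1 = Yᵀ := by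
  simp only [conjTranspose_single, star_one, single_mul_mul_single, one_mul, mul_one]
  rw [sum_sum_single]
  rfl

theorem sum_sum_conjTranspose_antisymm_mul_transpose_mul_antisymm (X : Matrix n n R) :
    ∑ p, ∑ q, (single p q (1 : R) - single q p 1)ᴴ * Xᵀ * (single p q 1 - single q p 1) =
      (2 : R) • (X.trace • 1 - X) := by
  simp only [conjTranspose_sub, sub_mul, mul_sub, Finset.sum_sub_distrib]
  rw [Finset.sum_comm (f := fun p q => (single q p (1 : R))ᴴ * Xᵀ * single q p 1),
    sum_sum_conjTranspose_single_mul_mul_single,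
    sum_sum_conjTranspose_single_swap_mul_mul_single,
    Finset.sum_comm (f := fun p q => (single p q (1 : R))ᴴ * Xᵀ * single q p 1),
    sum_sum_conjTranspose_single_swap_mul_mul_single, trace_transpose, transpose_transpose]
  module

end Identities

section Maps

variable [CommRing R] [StarRing R]

def IsPositiveMap [PartialOrder R] (Φ : Matrix n n R → Matrix n n R) : Prop :=
  ∀ A, A.PosSemidef → (Φ A).PosSemidef

def IsDecomposableMap (Φ : Matrix n n R → Matrix n n R) : Prop :=
  ∃ (k l : ℕ) (A : Fin k → Matrix n n R) (B : Fin l → Matrix n n R),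
    ∀ X, Φ X = ∑ i, (A i)ᴴ * X * A i + ∑ j, (B j)ᴴ * Xᵀ * B j

theorem IsDecomposableMap.of_fintype {ι κ : Type*} [Fintype ι] [Fintype κ]
    {Φ : Matrix n n R → Matrix n n R} (A : ι → Matrix n n R) (B : κ → Matrix n n R)
    (hΦ : ∀ X, Φ X = ∑ i, (A i)ᴴ * X * A i + ∑ j, (B j)ᴴ * Xᵀ * B j) :
    IsDecomposableMap Φ :=
  ⟨_, _, A ∘ (Fintype.equivFin ι).symm, B ∘ (Fintype.equivFin κ).symm, fun X => by
    simp only [hΦ, Function.comp_apply, Equiv.sum_comp (Fintype.equivFin _).symm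
      (fun i => (A i)ᴴ * X * A i), Equiv.sum_comp (Fintype.equivFin _).symm
      (fun j => (B j)ᴴ * Xᵀ * B j)]⟩

theorem IsDecomposableMap.isPositiveMap [PartialOrder R] [AddLeftMono R]
    {Φ : Matrix n n R → Matrix n n R} (hΦ : IsDecomposableMap Φ) : IsPositiveMap Φ := by
  rintro M hM
  obtain ⟨k, l, A, B, hAB⟩ := hΦ
  rw [hAB]
  exact (posSemidef_sum _ fun i _ => hM.conjTranspose_mul_mul_same (A i)).add
    (posSemidef_sum _ fun j _ => hM.transpose.conjTranspose_mul_mul_same (B j))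

end Maps

section TraceShift

variable [DecidableEq n]

def traceShift (a ε : ℝ) (X : Matrix n n ℂ) : Matrix n n ℂ :=
  (a : ℂ) • X.trace • 1 - (ε : ℂ) • X

theorem le_of_isPositiveMap_traceShift [Nonempty n] {a ε : ℝ}
    (h : IsPositiveMap (traceShift (n := n) a ε)) : ε ≤ a := by
  obtain ⟨i⟩ := ‹Nonempty n›
  have hE : (single i i (1 : ℂ)).PosSemidef := by
    rw [← diagonal_single]
    exact .diagonal (Pi.single_nonneg.mpr zero_le_one)
  have hdiag := (h _ hE).diag_nonneg (i := i)
  simp only [traceShift, trace_single_eq_same, Matrix.sub_apply, Matrix.smul_apply, one_apply_eq,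
    single_apply_same, smul_eq_mul, mul_one] at hdiag
  exact sub_nonneg.mp (Complex.zero_le_real.mp (by exact_mod_cast hdiag))

theorem isDecomposableMap_traceShift {a ε : ℝ} (hε : 0 ≤ ε) (h : ε ≤ a) :
    IsDecomposableMap (traceShift (n := n) a ε) := by
  refine .of_fintype (fun pq : n × n => (√(a - ε) : ℂ) • single pq.1 pq.2 1)
    (fun pq : n × n => (√(ε / 2) : ℂ) • (single pq.1 pq.2 1 - single pq.2 pq.1 1)) fun X => ?_
  simp only [traceShift, conjTranspose_smul_mul_mul_smul,
    star_ofReal_sqrt_mul_ofReal_sqrt (sub_nonneg.mpr h),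
    star_ofReal_sqrt_mul_ofReal_sqrt (by positivity : 0 ≤ ε / 2), ← Finset.smul_sum,
    Fintype.sum_prod_type, sum_sum_conjTranspose_single_mul_mul_single,
    sum_sum_conjTranspose_antisymm_mul_transpose_mul_antisymm]
  push_cast
  module

theorem isDecomposableMap_traceShift_iff [Nonempty n] {a ε : ℝ} (hε : 0 ≤ ε) :
    IsDecomposableMap (traceShift (n := n) a ε) ↔ ε ≤ a :=
  ⟨fun h => le_of_isPositiveMap_traceShift h.isPositiveMap, isDecomposableMap_traceShift hε⟩

theorem isPositiveMap_traceShift_iff [Nonempty n] {a ε : ℝ} (hε : 0 ≤ ε) :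
    IsPositiveMap (traceShift (n := n) a ε) ↔ ε ≤ a :=
  ⟨le_of_isPositiveMap_traceShift, fun h => (isDecomposableMap_traceShift hε h).isPositiveMap⟩

end TraceShift

end Matrix

theorem stmt_16 (m : ℕ) (hm : 1 ≤ m) (ε₀ a : ℝ) (hε₀ : 0 < ε₀ ∧ ε₀ ≤ 1)
    (Φ : Matrix (Fin m) (Fin m) ℂ → Matrix (Fin m) (Fin m) ℂ)
    (hΦ : ∀ X, Φ X = (a : ℂ) • Matrix.trace X • (1 : Matrix (Fin m) (Fin m) ℂ)
      - (ε₀ : ℂ) • X) :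
    ((∃ (k l : ℕ) (A : Fin k → Matrix (Fin m) (Fin m) ℂ)
        (B : Fin l → Matrix (Fin m) (Fin m) ℂ),
      ∀ X : Matrix (Fin m) (Fin m) ℂ,
        Φ X = ∑ i, (A i)ᴴ * X * A i + ∑ j, (B j)ᴴ * Xᵀ * B j) ↔ ε₀ ≤ a) ∧
    ((∀ A : Matrix (Fin m) (Fin m) ℂ, A.PosSemidef → (Φ A).PosSemidef) ↔ ε₀ ≤ a) := by
  obtain rfl : Φ = traceShift a ε₀ := funext hΦ
  have : Nonempty (Fin m) := ⟨⟨0, hm⟩⟩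
  exact ⟨isDecomposableMap_traceShift_iff hε₀.1.le, isPositiveMap_traceShift_iff hε₀.1.le⟩
end

section
/- Let S ∈ M_4(ℂ) be the cyclic shift matrix with entries S_{i,j} = 1 if i ≡ j + 1 (mod 4) and 0 otherwise, and for X ∈ M_4(ℂ) let ε(X) denote the diagonal part of X (the diagonal matrix with the same diagonal entries as X). Define τ : M_4(ℂ) → M_4(ℂ) by τ(X) = 3·ε(X) + ε(S X Sᴴ) − X; explicitly, τ(X) has diagonal entries (τX)_{ii} = 2·x_{ii} + x_{i−1,i−1} (indices mod 4) and off-diagonal entries (τX)_{ij} = −x_{ij} for i ≠ j. Then τ is a positive map: τ(A) is positive semidefinite for every positive semidefinite A ∈ M_4(ℂ). -/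
/-! With `dᵢ = 3 aᵢᵢ + aᵢ₋₁,ᵢ₋₁` we have `τ(A) = diag(d) - A`, so it suffices that
`xᴴ A x ≤ ∑ dᵢ |xᵢ|²`. Writing `A = Bᴴ B` with columns `bᵢ`, `xᴴ A x = ‖∑ xᵢ bᵢ‖²`, which by the
triangle inequality is at most `(∑ √aᵢᵢ |xᵢ|)²`, and by a weighted Cauchy–Schwarz inequality this
is at most `∑ dᵢ |xᵢ|²` as soon as `∑ aᵢᵢ / dᵢ ≤ 1`. For our `d` this is the cyclic inequality
`∑ tᵢ / (3 tᵢ + tᵢ₋₁) ≤ 1` in four nonnegative variables, which after clearing denominators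
becomes a sum of squares. -/

open Matrix WithLp
open scoped ComplexOrder

theorem cyclic_sum_div_three_mul_add_le_one {a b c d : ℝ}
    (ha : 0 < a) (hb : 0 < b) (hc : 0 < c) (hd : 0 < d) :
    a / (3 * a + d) + b / (3 * b + a) + c / (3 * c + b) + d / (3 * d + c) ≤ 1 := by
  rw [div_add_div _ _ (by positivity) (by positivity),
    div_add_div _ _ (by positivity) (by positivity),
    div_add_div _ _ (by positivity) (by positivity), div_le_one (by positivity)]
  -- `(a + b + c + d) * (rhs - lhs)` is exactly this sum.
  have hsos : 0 ≤ 7*(a^2*b)*(c-d)^2 + (a^2*c)*(b-c)^2 + (a^2*c)*(b-d)^2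
      + 2*(a^2*c)*(c-d)^2 + 2*(a^2*d)*(b-c)^2 + 2*(a*b*c)*(a-b)^2
      + (a*b*c)*(b-d)^2 + (a*b*d)*(a-c)^2 + 2*(a*b*d)*(a-d)^2
      + (a*c*d)*(b-d)^2 + 2*(a*c*d)*(c-d)^2 + (a*c^2)*(a-b)^2
      + 2*(a*c^2)*(a-d)^2 + 2*(a*b^2)*(c-d)^2 + 7*(a*d^2)*(b-c)^2
      + 7*(b^2*c)*(a-d)^2 + (b^2*d)*(a-c)^2 + (b*c*d)*(a-c)^2
      + 2*(b*c*d)*(b-c)^2 + 2*(b*c^2)*(a-d)^2 + 2*(b*d^2)*(a-b)^2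
      + (b*d^2)*(b-c)^2 + 8*(c^2*d)*(a-b)^2 + 3*d*(a*c-b*d)^2 := by positivity
  nlinarith [hsos, add_pos (add_pos (add_pos ha hb) hc) hd]

theorem div_three_mul_add_le_one_third {t s : ℝ} (ht : 0 ≤ t) (hs : 0 ≤ s) :
    t / (3 * t + s) ≤ 1 / 3 :=
  div_le_of_le_mul₀ (by positivity) (by norm_num) (by linarith)

theorem sum_div_three_mul_add_prev_le_one (t : Fin 4 → ℝ) (ht : ∀ i, 0 ≤ t i) :
    ∑ i, t i / (3 * t i + t (i - 1)) ≤ 1 := by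
  by_cases hzero : ∃ k, t k = 0
  · obtain ⟨k, hk⟩ := hzero
    rw [← Finset.sum_erase_add _ _ (Finset.mem_univ k), hk, zero_div, add_zero]
    calc ∑ i ∈ Finset.univ.erase k, t i / (3 * t i + t (i - 1))
        ≤ (Finset.univ.erase k).card • (1 / 3 : ℝ) :=
          Finset.sum_le_card_nsmul _ _ _ fun i _ => div_three_mul_add_le_one_third (ht i) (ht _)
      _ = 1 := by simp [Finset.card_erase_of_mem]
  have hpos i : 0 < t i := (ht i).lt_of_ne' fun h => hzero ⟨i, h⟩
  rw [Fin.sum_univ_four]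
  exact cyclic_sum_div_three_mul_add_le_one (hpos 0) (hpos 1) (hpos 2) (hpos 3)

theorem sq_sum_mul_le_sum_mul_sq_of_sum_sq_div_le_one {ι : Type*} (s : Finset ι) {c d : ι → ℝ}
    (u : ι → ℝ) (hcd : ∀ i ∈ s, c i ^ 2 ≤ d i) (hsum : ∑ i ∈ s, c i ^ 2 / d i ≤ 1) :
    (∑ i ∈ s, c i * u i) ^ 2 ≤ ∑ i ∈ s, d i * u i ^ 2 := by
  have hd i (hi : i ∈ s) : 0 ≤ d i := (sq_nonneg _).trans (hcd i hi)
  calc (∑ i ∈ s, c i * u i) ^ 2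
      ≤ (∑ i ∈ s, c i ^ 2 / d i) * ∑ i ∈ s, d i * u i ^ 2 := by
        refine Finset.sum_sq_le_sum_mul_sum_of_sq_le_mul s
          (fun i hi => div_nonneg (sq_nonneg _) (hd i hi))
          (fun i hi => mul_nonneg (hd i hi) (sq_nonneg _)) fun i hi => ?_
        rcases (hd i hi).eq_or_lt with h0 | hpos
        · have hc : c i = 0 := pow_eq_zero_iff two_ne_zero |>.mp
            (le_antisymm (h0 ▸ hcd i hi) (sq_nonneg _))
          simp [hc]
        · exact le_of_eq (by field_simp)
    _ ≤ ∑ i ∈ s, d i * u i ^ 2 :=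
        mul_le_of_le_one_left (Finset.sum_nonneg fun i hi => mul_nonneg (hd i hi) (sq_nonneg _))
          hsum

section RCLike

variable {m n 𝕜 : Type*} [Fintype m] [Fintype n] [RCLike 𝕜]

theorem re_star_dotProduct_conjTranspose_mul_self_mulVec (B : Matrix m n 𝕜) (x : n → 𝕜) :
    RCLike.re (star x ⬝ᵥ (Bᴴ * B) *ᵥ x) = ‖toLp 2 (B *ᵥ x)‖ ^ 2 := by
  rw [← mulVec_mulVec, dotProduct_mulVec, vecMul_conjTranspose, star_star,
    @norm_sq_eq_re_inner 𝕜, EuclideanSpace.inner_toLp_toLp, dotProduct_comm]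

open scoped MatrixOrder in
theorem Matrix.PosSemidef.re_dotProduct_mulVec_le {A : Matrix n n 𝕜} (hA : A.PosSemidef)
    (x : n → 𝕜) :
    RCLike.re (star x ⬝ᵥ A *ᵥ x) ≤ (∑ i, √(RCLike.re (A i i)) * ‖x i‖) ^ 2 := by
  classical
  obtain ⟨B, hB⟩ := CStarAlgebra.nonneg_iff_eq_star_mul_self.mp hA.nonneg
  rw [star_eq_conjTranspose] at hB
  subst hB
  have hcol i : √(RCLike.re ((Bᴴ * B) i i)) = ‖toLp 2 (B.col i)‖ := by
    have h := re_star_dotProduct_conjTranspose_mul_self_mulVec B (Pi.single i 1)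
    simp only [Pi.star_single, star_one, mulVec_single, MulOpposite.op_one, one_smul,
      single_dotProduct, col_apply, one_mul] at h
    rw [h, Real.sqrt_sq (norm_nonneg _)]
  have hsum : toLp 2 (B *ᵥ x) = ∑ i, x i • toLp 2 (B.col i) := by
    ext k
    simp [mulVec, dotProduct, mul_comm]
  rw [re_star_dotProduct_conjTranspose_mul_self_mulVec, hsum]
  simp_rw [hcol, mul_comm _ ‖x _‖, ← norm_smul]
  gcongr
  exact norm_sum_le _ _

theorem Matrix.PosSemidef.posSemidef_diagonal_sub [DecidableEq n] {A : Matrix n n 𝕜}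
    (hA : A.PosSemidef) {d : n → ℝ} (hle : ∀ i, RCLike.re (A i i) ≤ d i)
    (hsum : ∑ i, RCLike.re (A i i) / d i ≤ 1) :
    (diagonal (fun i => (d i : 𝕜)) - A).PosSemidef := by
  have hD : (diagonal (fun i => (d i : 𝕜))).IsHermitian :=
    isHermitian_diagonal_iff.mpr fun i => by simp [IsSelfAdjoint]
  refine .of_dotProduct_mulVec_nonneg (hD.sub hA.1) fun x => RCLike.nonneg_iff.mpr
    ⟨?_, (hD.sub hA.1).im_star_dotProduct_mulVec_self x⟩
  have hdiag i : 0 ≤ RCLike.re (A i i) := (RCLike.nonneg_iff.mp hA.diag_nonneg).1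
  have hquad : RCLike.re (star x ⬝ᵥ diagonal (fun i => (d i : 𝕜)) *ᵥ x)
      = ∑ i, d i * ‖x i‖ ^ 2 := by
    simp only [dotProduct, mulVec_diagonal, Pi.star_apply, map_sum]
    refine Finset.sum_congr rfl fun i _ => ?_
    rw [mul_left_comm, RCLike.star_def, RCLike.conj_mul, ← RCLike.ofReal_pow,
      ← RCLike.ofReal_mul, RCLike.ofReal_re]
  rw [sub_mulVec, dotProduct_sub, map_sub, hquad, sub_nonneg]
  calc RCLike.re (star x ⬝ᵥ A *ᵥ x) ≤ (∑ i, √(RCLike.re (A i i)) * ‖x i‖) ^ 2 :=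
        hA.re_dotProduct_mulVec_le x
    _ ≤ ∑ i, d i * ‖x i‖ ^ 2 := by
        refine sq_sum_mul_le_sum_mul_sq_of_sum_sq_div_le_one _ _ (fun i _ => ?_) ?_ <;>
          simp only [Real.sq_sqrt (hdiag _)]
        exacts [hle i, hsum]

end RCLike

theorem stmt_18 (τ : Matrix (Fin 4) (Fin 4) ℂ → Matrix (Fin 4) (Fin 4) ℂ)
    (hτ : ∀ X, τ X = Matrix.of fun i j : Fin 4 =>
      if i = j then 2 * X i i + X (i - 1) (i - 1) else - X i j) :
    ∀ A : Matrix (Fin 4) (Fin 4) ℂ, A.PosSemidef → (τ A).PosSemidef := by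
  intro A hA
  set t : Fin 4 → ℝ := fun i => RCLike.re (A i i)
  have ht i : 0 ≤ t i := (RCLike.nonneg_iff.mp hA.diag_nonneg).1
  have hτA : τ A = diagonal (fun i => ((3 * t i + t (i - 1) : ℝ) : ℂ)) - A := by
    ext i j
    rcases eq_or_ne i j with rfl | hij
    · have hre k : ((A k k).re : ℂ) = A k k := hA.1.coe_re_apply_self k
      rw [hτ, of_apply, if_pos rfl, Matrix.sub_apply, diagonal_apply_eq]
      push_cast [t, RCLike.re_to_complex, hre]
      ring
    · simp [hτ, hij]
  rw [hτA]
  exact hA.posSemidef_diagonal_sub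
    (fun i => show t i ≤ 3 * t i + t (i - 1) by linarith [ht i, ht (i - 1)])
    (sum_div_three_mul_add_prev_le_one t ht)
end

section
/- Consider the real polynomial in the variables x = (x₁,x₂,x₃,x₄) ∈ ℝ⁴ and y = (y₁,y₂,y₃,y₄) ∈ ℝ⁴ given by p(x,y) = (2x₁² + x₄²)y₁² + (2x₂² + x₁²)y₂² + (2x₃² + x₂²)y₃² + (2x₄² + x₃²)y₄² − 2·∑_{1 ≤ i < j ≤ 4} x_i x_j y_i y_j. Then p is not a finite sum of squares of real bilinear forms: there is no finite family of real 4×4 matrices A_1, …, A_L such that p(x,y) = ∑_{r=1}^{L} (xᵗ A_r y)² for all x, y ∈ ℝ⁴. -/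
/-!
The form `p = cyclicBiquadratic` vanishes at `(ε, ε)` for every sign vector `ε` (all products
`xᵢ yᵢ` equal `1` there) and at `(eᵢ, eⱼ)` whenever the monomial `xᵢ² yⱼ²` is absent from `p`.
In a sum of squares of bilinear forms, each form `xᵀ A y` must vanish at these points as well.
Combining four sign vectors gives `A₀₃ + A₃₀ + A₁₃ + A₃₁ = 0`, and `A₀₃ = A₁₃ = A₃₁ = 0`, so
`A₃₀ = 0` for every `A`. But then `p(e₃, e₀) = ∑ (A₃₀)² = 0`, whereas the coefficient of
`x₃² y₀²` in `p` is `1`.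
-/

open Matrix

lemma sum_sum_mul_mul_eq_dotProduct_mulVec {n R : Type*} [Fintype n] [CommSemiring R]
    (x y : n → R) (M : Matrix n n R) :
    ∑ i, ∑ j, x i * M i j * y j = x ⬝ᵥ M *ᵥ y := by
  simp only [dotProduct, mulVec, Finset.mul_sum, mul_assoc]

lemma dotProduct_mulVec_eq_zero_of_sum_sq {ι n : Type*} [Fintype ι] [Fintype n]
    {q : (n → ℝ) → (n → ℝ) → ℝ} {A : ι → Matrix n n ℝ}
    (h : ∀ x y, q x y = ∑ r, (x ⬝ᵥ A r *ᵥ y) ^ 2) {x y : n → ℝ} (hxy : q x y = 0) (r : ι) :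
    x ⬝ᵥ A r *ᵥ y = 0 := by
  have hsum : ∑ r, x ⬝ᵥ A r *ᵥ y * x ⬝ᵥ A r *ᵥ y = 0 := by simpa only [h, sq] using hxy
  exact (Finset.sum_mul_self_eq_zero_iff _ _).mp hsum r (Finset.mem_univ r)

lemma sign_polarization {R : Type*} [CommRing R] (M : Matrix (Fin 4) (Fin 4) R) :
    ![1, 1, 1, 1] ⬝ᵥ M *ᵥ ![1, 1, 1, 1] - ![1, 1, 1, -1] ⬝ᵥ M *ᵥ ![1, 1, 1, -1]
      + ![1, 1, -1, 1] ⬝ᵥ M *ᵥ ![1, 1, -1, 1] - ![1, 1, -1, -1] ⬝ᵥ M *ᵥ ![1, 1, -1, -1]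
      = 4 * (M 0 3 + M 3 0 + M 1 3 + M 3 1) := by
  simp only [dotProduct, mulVec, Fin.sum_univ_four, Fin.isValue, cons_val_zero, cons_val_one,
    cons_val, mul_one, one_mul, mul_neg, neg_mul]
  ring

def cyclicBiquadratic (x y : Fin 4 → ℝ) : ℝ :=
  (2 * x 0 ^ 2 + x 3 ^ 2) * y 0 ^ 2 + (2 * x 1 ^ 2 + x 0 ^ 2) * y 1 ^ 2
    + (2 * x 2 ^ 2 + x 1 ^ 2) * y 2 ^ 2 + (2 * x 3 ^ 2 + x 2 ^ 2) * y 3 ^ 2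
    - 2 * (x 0 * x 1 * y 0 * y 1 + x 0 * x 2 * y 0 * y 2 + x 0 * x 3 * y 0 * y 3
        + x 1 * x 2 * y 1 * y 2 + x 1 * x 3 * y 1 * y 3 + x 2 * x 3 * y 2 * y 3)

lemma cyclicBiquadratic_self_of_sq_eq_one {x : Fin 4 → ℝ} (hx : ∀ i, x i ^ 2 = 1) :
    cyclicBiquadratic x x = 0 := by
  have hprod : ∀ i j, x i * x j * x i * x j = 1 := fun i j => by
    rw [show x i * x j * x i * x j = x i ^ 2 * x j ^ 2 by ring, hx, hx, one_mul]
  simp only [cyclicBiquadratic, hprod, hx]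
  norm_num

theorem stmt_19 :
    ¬ ∃ (L : ℕ) (A : Fin L → Matrix (Fin 4) (Fin 4) ℝ),
      ∀ x y : Fin 4 → ℝ,
        (2 * x 0 ^ 2 + x 3 ^ 2) * y 0 ^ 2 + (2 * x 1 ^ 2 + x 0 ^ 2) * y 1 ^ 2
          + (2 * x 2 ^ 2 + x 1 ^ 2) * y 2 ^ 2 + (2 * x 3 ^ 2 + x 2 ^ 2) * y 3 ^ 2
          - 2 * (x 0 * x 1 * y 0 * y 1 + x 0 * x 2 * y 0 * y 2 + x 0 * x 3 * y 0 * y 3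
              + x 1 * x 2 * y 1 * y 2 + x 1 * x 3 * y 1 * y 3 + x 2 * x 3 * y 2 * y 3)
        = ∑ r : Fin L, (∑ i : Fin 4, ∑ j : Fin 4, x i * A r i j * y j) ^ 2 := by
  rintro ⟨L, A, h⟩
  replace h : ∀ x y, cyclicBiquadratic x y = ∑ r, (x ⬝ᵥ A r *ᵥ y) ^ 2 := by
    simpa only [cyclicBiquadratic, sum_sum_mul_mul_eq_dotProduct_mulVec] using h
  have sign_zero : ∀ r, ∀ x : Fin 4 → ℝ, (∀ i, x i ^ 2 = 1) → x ⬝ᵥ A r *ᵥ x = 0 :=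
    fun r x hx => dotProduct_mulVec_eq_zero_of_sum_sq h (cyclicBiquadratic_self_of_sq_eq_one hx) r
  have entry_zero : ∀ i j, cyclicBiquadratic (Pi.single i 1) (Pi.single j 1) = 0 →
      ∀ r, A r i j = 0 := fun i j hij r => by
    simpa using dotProduct_mulVec_eq_zero_of_sum_sq h hij r
  have entry_three_zero : ∀ r, A r 3 0 = 0 := fun r => by
    have polarization := sign_polarization (A r)
    rw [sign_zero r _ (by simp [Fin.forall_fin_succ]),
      sign_zero r _ (by simp [Fin.forall_fin_succ]),
      sign_zero r _ (by simp [Fin.forall_fin_succ]),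
      sign_zero r _ (by simp [Fin.forall_fin_succ]),
      entry_zero 0 3 (by simp [cyclicBiquadratic]) r,
      entry_zero 1 3 (by simp [cyclicBiquadratic]) r,
      entry_zero 3 1 (by simp [cyclicBiquadratic]) r] at polarization
    linarith
  have h30 := h (Pi.single 3 1) (Pi.single 0 1)
  simp [cyclicBiquadratic, entry_three_zero] at h30
end
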